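/- arXiv:2506.04957 — 2 statements merged into one kernel-verified Lean document; each statement's English description precedes it below -/
import Mathlib

section
/- Let ψ : (0,∞) → ℝ be a positive, monotonically decreasing C² solution of the Painlevé III type equation ψ''(ρ) + ψ'(ρ)/ρ = (1/2)·sinh(2ψ(ρ)). Then for every ρ₀ > 0 there exist constants C, c > 0 such that ψ(ρ) ≤ C·e^{-cρ} for all ρ ≥ ρ₀. -/
open Real Set Filter Topology

set_option maxHeartbeats 1000000

/-- A positive, monotonically decreasing `C²` solution of the Painlevé III type
equation `ψ'' + ψ'/ρ = (1/2)·sinh(2ψ)` decays exponentially: for every `ρ₀ > 0`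
there are `C, c > 0` with `ψ(ρ) ≤ C·e^{-cρ}` for all `ρ ≥ ρ₀`. -/
theorem painleveIII_exponential_decay (ψ : ℝ → ℝ)
    (hpos : ∀ ρ > (0:ℝ), 0 < ψ ρ)
    (hdec : AntitoneOn ψ (Set.Ioi 0))
    (hreg : ContDiffOn ℝ 2 ψ (Set.Ioi 0))
    (hode : ∀ ρ > (0:ℝ),
      deriv (deriv ψ) ρ + deriv ψ ρ / ρ = (1/2) * Real.sinh (2 * ψ ρ))
    (ρ₀ : ℝ) (hρ₀ : 0 < ρ₀) :
    ∃ C c : ℝ, 0 < C ∧ 0 < c ∧ ∀ ρ ≥ ρ₀, ψ ρ ≤ C * Real.exp (-c * ρ) := by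
  -- basic differentiability facts
  have hψ1 : ∀ ρ > (0:ℝ), HasDerivAt ψ (deriv ψ ρ) ρ := by
    intro ρ hρ
    exact (((hreg.differentiableOn (by norm_num)).differentiableAt
      (isOpen_Ioi.mem_nhds hρ))).hasDerivAt
  have hreg' : ContDiffOn ℝ 1 (deriv ψ) (Set.Ioi 0) :=
    hreg.deriv_of_isOpen isOpen_Ioi (by norm_num)
  have hψ2 : ∀ ρ > (0:ℝ), HasDerivAt (deriv ψ) (deriv (deriv ψ) ρ) ρ := by
    intro ρ hρ
    exact (((hreg'.differentiableOn (by norm_num)).differentiableAt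
      (isOpen_Ioi.mem_nhds hρ))).hasDerivAt
  -- the derivative is nonpositive
  have hd0 : ∀ ρ > (0:ℝ), deriv ψ ρ ≤ 0 := by
    intro ρ hρ
    have ht : Tendsto (slope ψ ρ) (𝓝[>] ρ) (𝓝 (deriv ψ ρ)) :=
      (hasDerivAt_iff_tendsto_slope.1 (hψ1 ρ hρ)).mono_left
        (nhdsWithin_mono ρ fun y hy => Set.mem_compl_singleton_iff.mpr (ne_of_gt hy))
    refine le_of_tendsto ht ?_
    filter_upwards [self_mem_nhdsWithin] with y hy
    rw [slope_def_field]
    have h1 : ψ y ≤ ψ ρ := hdec hρ (hρ.trans hy) (le_of_lt hy)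
    have h2 : (0:ℝ) < y - ρ := by simpa using hy
    rw [div_eq_mul_inv]
    exact mul_nonpos_of_nonpos_of_nonneg (by linarith) (by positivity)
  -- sinh inequality
  have hsinh : ∀ ρ > (0:ℝ), ψ ρ ≤ (1/2) * Real.sinh (2 * ψ ρ) := by
    intro ρ hρ
    have := Real.self_le_sinh_iff.2 (by linarith [hpos ρ hρ] : (0:ℝ) ≤ 2 * ψ ρ)
    linarith
  -- the infimum of ψ is 0: values get arbitrarily small
  have hZ : ∀ ε > (0:ℝ), ∀ b > (0:ℝ), ∃ ρ > b, ψ ρ < ε := by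
    intro ε hε b hb
    by_contra hcon
    push_neg at hcon
    -- hcon : ∀ ρ > b, ε ≤ ψ ρ
    set g : ℝ → ℝ := fun x => x * deriv ψ x - ε * x ^ 2 / 2 with hg
    have hgd : ∀ x > (0:ℝ),
        HasDerivAt g (deriv ψ x + x * deriv (deriv ψ) x - ε * x) x := by
      intro x hx
      have h1 : HasDerivAt (fun x : ℝ => x * deriv ψ x)
          (1 * deriv ψ x + x * deriv (deriv ψ) x) x :=
        (hasDerivAt_id x).mul (hψ2 x hx)
      have h2 : HasDerivAt (fun x : ℝ => ε * x ^ 2 / 2) (ε * x) x := by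
        have := ((hasDerivAt_pow 2 x).const_mul ε).div_const 2
        exact this.congr_deriv (by norm_num; ring)
      have := h1.sub h2
      exact this.congr_deriv (by ring)
    have hgd' : ∀ x > b, 0 ≤ deriv ψ x + x * deriv (deriv ψ) x - ε * x := by
      intro x hx
      have hx0 : (0:ℝ) < x := hb.trans hx
      have hode' := hode x hx0
      have hψx : ε ≤ ψ x := hcon x hx
      have hs := hsinh x hx0
      have : deriv ψ x + x * deriv (deriv ψ) x
          = x * ((1/2) * Real.sinh (2 * ψ x)) := by
        field_simp at hode' ⊢
        nlinarith [hode']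
      rw [this]
      nlinarith [hs]
    set b' : ℝ := b + 1 with hb'
    have hb'0 : (0:ℝ) < b' := by linarith
    have hb'1 : (1:ℝ) < b' := by linarith
    have hmono : MonotoneOn g (Set.Ici b') := by
      apply monotoneOn_of_deriv_nonneg (convex_Ici b')
      · apply ContinuousOn.sub
        · exact continuousOn_id.mul ((hreg.continuousOn_deriv_of_isOpen isOpen_Ioi
            (by norm_num)).mono (fun x hx => lt_of_lt_of_le hb'0 hx))
        · exact Continuous.continuousOn (by continuity)
      · intro x hx
        rw [interior_Ici] at hx
        exact (hgd x (hb'0.trans hx)).differentiableAt.differentiableWithinAt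
      · intro x hx
        rw [interior_Ici] at hx
        rw [(hgd x (hb'0.trans hx)).deriv]
        exact hgd' x (by linarith [Set.mem_Ioi.1 hx])
    -- pick a large x to get a contradiction
    set x : ℝ := max b' ((2 * |g b'| + 2) / ε) with hx
    have hxb' : b' ≤ x := le_max_left _ _
    have hx2 : (2 * |g b'| + 2) / ε ≤ x := le_max_right _ _
    have hgx : g b' ≤ g x := hmono (Set.mem_Ici.2 le_rfl) (Set.mem_Ici.2 hxb') hxb'
    have hx0 : (0:ℝ) < x := lt_of_lt_of_le hb'0 hxb'
    have hxd : x * deriv ψ x ≤ 0 :=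
      mul_nonpos_of_nonneg_of_nonpos (le_of_lt hx0) (hd0 x hx0)
    have hgb : -|g b'| ≤ g b' := neg_abs_le _
    have hεx : 2 * |g b'| + 2 ≤ ε * x := by
      rw [div_le_iff₀ hε] at hx2
      linarith [mul_comm x ε]
    have hx1 : (1:ℝ) ≤ x := le_of_lt (lt_of_lt_of_le hb'1 hxb')
    have hq : ε * x ≤ ε * x ^ 2 := by
      nlinarith [mul_nonneg (mul_nonneg hε.le hx0.le) (sub_nonneg.2 hx1)]
    have hgx' : g b' ≤ x * deriv ψ x - ε * x ^ 2 / 2 := hgx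
    clear_value g b' x
    linarith
  -- main comparison argument
  have hψρ₀ := hpos ρ₀ hρ₀
  obtain ⟨C, hCdef⟩ : ∃ C : ℝ, C = ψ ρ₀ * Real.exp ((1/2) * ρ₀) := ⟨_, rfl⟩
  have hC : 0 < C := by rw [hCdef]; positivity
  obtain ⟨φ, hφdef⟩ : ∃ φ : ℝ → ℝ, φ = fun ρ => C * Real.exp (-(1/2) * ρ) := ⟨_, rfl⟩
  have hφpos : ∀ ρ, 0 < φ ρ := by
    intro ρ
    simp only [hφdef]
    exact mul_pos hC (Real.exp_pos _)
  have hφd : ∀ x : ℝ, HasDerivAt φ (-(1/2) * φ x) x := by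
    intro x
    simp only [hφdef]
    have h1 : HasDerivAt (fun ρ : ℝ => -(1/2) * ρ) (-(1/2)) x := by
      simpa using (hasDerivAt_id x).const_mul (-(1/2) : ℝ)
    have h2 := ((Real.hasDerivAt_exp (-(1/2) * x)).comp x h1).const_mul C
    exact h2.congr_deriv (by ring)
  have hφcont : Continuous φ := by
    rw [hφdef]
    continuity
  have hφρ₀ : φ ρ₀ = ψ ρ₀ := by
    simp only [hφdef, hCdef]
    rw [mul_assoc, ← Real.exp_add]
    norm_num
  refine ⟨C, 1/2, hC, by norm_num, ?_⟩
  intro ρ₁ hρ₁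
  by_contra hcon
  push_neg at hcon
  have hcon' : φ ρ₁ < ψ ρ₁ := by rw [hφdef]; exact hcon
  have hρ₁0 : (0:ℝ) < ρ₁ := lt_of_lt_of_le hρ₀ hρ₁
  obtain ⟨h, hhdef⟩ : ∃ h : ℝ → ℝ, h = fun x => ψ x - φ x := ⟨_, rfl⟩
  obtain ⟨M, hMdef⟩ : ∃ M : ℝ, M = h ρ₁ := ⟨_, rfl⟩
  have hMpos : 0 < M := by
    rw [hMdef]; simp only [hhdef]; linarith
  obtain ⟨ρ₂, hρ₂gt, hρ₂lt⟩ := hZ (M/2) (by linarith) ρ₁ hρ₁0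
  have hρ₂0 : (0:ℝ) < ρ₂ := hρ₁0.trans hρ₂gt
  have htail : ∀ x ≥ ρ₂, h x < M/2 := by
    intro x hx
    have hx0 : (0:ℝ) < x := lt_of_lt_of_le hρ₂0 hx
    have h1 : ψ x ≤ ψ ρ₂ := hdec hρ₂0 hx0 hx
    have h2 := hφpos x
    simp only [hhdef]
    linarith
  have hIcc : Set.Icc ρ₀ ρ₂ ⊆ Set.Ioi (0:ℝ) := fun x hx => lt_of_lt_of_le hρ₀ hx.1
  have hhcont : ContinuousOn h (Set.Icc ρ₀ ρ₂) := by
    rw [hhdef]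
    exact (hreg.continuousOn.mono hIcc).sub hφcont.continuousOn
  have hρ₀ρ₂ : ρ₀ ≤ ρ₂ := le_of_lt (lt_of_le_of_lt hρ₁ hρ₂gt)
  obtain ⟨a, haI, hamax⟩ :=
    isCompact_Icc.exists_isMaxOn (Set.nonempty_Icc.2 hρ₀ρ₂) hhcont
  have hM : M ≤ h a := by rw [hMdef]; exact hamax ⟨hρ₁, le_of_lt hρ₂gt⟩
  have hglob : ∀ x ≥ ρ₀, h x ≤ h a := by
    intro x hx
    rcases le_or_gt x ρ₂ with hle | hlt
    · exact hamax ⟨hx, hle⟩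
    · have := htail x (le_of_lt hlt)
      linarith
  have hhρ₀ : h ρ₀ = 0 := by simp only [hhdef]; rw [hφρ₀]; ring
  have ha₀ : ρ₀ < a := by
    rcases lt_or_eq_of_le haI.1 with hlt | heq
    · exact hlt
    · exfalso; rw [← heq, hhρ₀] at hM; linarith
  have ha0 : (0:ℝ) < a := hρ₀.trans ha₀
  have hloc : IsLocalMax h a := by
    filter_upwards [isOpen_Ioi.mem_nhds ha₀] with x hx using hglob x (le_of_lt hx)
  have hhd : ∀ x > (0:ℝ), HasDerivAt h (deriv ψ x + 1/2 * φ x) x := by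
    intro x hx
    rw [hhdef]
    have := (hψ1 x hx).sub (hφd x)
    exact this.congr_deriv (by ring)
  have h'a0 : deriv ψ a + 1/2 * φ a = 0 :=
    hloc.hasDerivAt_eq_zero (hhd a ha0)
  obtain ⟨h1, hh1def⟩ : ∃ h1 : ℝ → ℝ, h1 = fun x => deriv ψ x + 1/2 * φ x := ⟨_, rfl⟩
  have hh1d : HasDerivAt h1 (deriv (deriv ψ) a + 1/2 * (-(1/2) * φ a)) a := by
    rw [hh1def]
    exact (hψ2 a ha0).add ((hφd a).const_mul (1/2))
  have hda : deriv ψ a = -(1/2) * φ a := by linarith [h'a0]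
  have ht : deriv ψ a / a ≤ 0 := by
    apply div_nonpos_of_nonpos_of_nonneg _ ha0.le
    rw [hda]
    nlinarith [hφpos a]
  have hM' : M ≤ ψ a - φ a := by
    have := hM; simp only [hhdef] at this; exact this
  have hψa : 0 < ψ a := hpos a ha0
  have hK : 0 < deriv (deriv ψ) a + 1/2 * (-(1/2) * φ a) := by
    have hodea := hode a ha0
    have hsa := hsinh a ha0
    have := hφpos a
    linarith
  have hslope : Tendsto (slope h1 a) (𝓝[>] a)
      (𝓝 (deriv (deriv ψ) a + 1/2 * (-(1/2) * φ a))) :=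
    (hasDerivAt_iff_tendsto_slope.1 hh1d).mono_left
      (nhdsWithin_mono a fun y hy => Set.mem_compl_singleton_iff.mpr (ne_of_gt hy))
  have hev : {y | 0 < slope h1 a y} ∈ 𝓝[>] a :=
    hslope.eventually (eventually_gt_nhds hK)
  obtain ⟨u, hu, hsub⟩ := mem_nhdsGT_iff_exists_Ioo_subset.1 hev
  have hau : a < u := hu
  have hab : a < (a + u)/2 := by linarith
  have hbu : (a + u)/2 < u := by linarith
  have hmono : StrictMonoOn h (Set.Icc a ((a + u)/2)) := by
    apply strictMonoOn_of_deriv_pos (convex_Icc a ((a + u)/2))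
    · rw [hhdef]
      exact (hreg.continuousOn.mono
        (fun x hx => lt_of_lt_of_le ha0 hx.1)).sub hφcont.continuousOn
    · intro y hy
      rw [interior_Icc] at hy
      have hy0 : (0:ℝ) < y := ha0.trans hy.1
      rw [(hhd y hy0).deriv]
      have hsl : 0 < slope h1 a y := hsub ⟨hy.1, hy.2.trans hbu⟩
      rw [slope_def_field] at hsl
      simp only [hh1def] at hsl
      rw [h'a0] at hsl
      rcases div_pos_iff.1 hsl with ⟨hnum, _⟩ | ⟨_, hden⟩
      · linarith
      · linarith [sub_pos.2 hy.1]
  have hlt : h a < h ((a + u)/2) :=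
    hmono (Set.left_mem_Icc.2 hab.le) (Set.right_mem_Icc.2 hab.le) hab
  have := hglob ((a + u)/2) (by linarith)
  linarith
end

section
/- Let H be a positive definite Hermitian 2×2 matrix-valued function of the form H = diag(|z|^k, |z|^{-k}) with k > 0 on a punctured disc, and let C be a holomorphic symmetric 2×2 matrix satisfying the compatibility condition H̄^{-1}·C = C·H. Then C has vanishing diagonal entries, i.e., C = [[0, c],[c, 0]] for some holomorphic function c. -/
open Matrix

private lemma aux_zero_of_zero_off_circle {r : ℝ} {U : Set ℂ}
    (hU : U = Metric.ball 0 r \ {0}) (f : ℂ → ℂ) (hf : ContinuousOn f U)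
    (h : ∀ z ∈ U, ‖z‖ ≠ 1 → f z = 0) : ∀ z ∈ U, f z = 0 := by
  intro z hz
  by_cases h1 : ‖z‖ = 1
  · have hz0 : z ≠ 0 := by rw [hU] at hz; exact hz.2
    have hzr : ‖z‖ < r := by
      rw [hU] at hz
      simpa [Complex.dist_eq] using hz.1
    set t : ℕ → ℝ := fun n => 1 - 1 / (n + 2) with ht
    have ht0 : ∀ n, 0 < t n := by
      intro n
      have h2 : 1 / ((n : ℝ) + 2) ≤ 1 / 2 := by
        apply one_div_le_one_div_of_le <;> [norm_num; linarith [Nat.cast_nonneg (α := ℝ) n]]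
      simp only [ht]; linarith
    have ht1 : ∀ n, t n < 1 := by
      intro n
      have : 0 < 1 / ((n : ℝ) + 2) := by positivity
      simp only [ht]; linarith
    have htend_t : Filter.Tendsto t Filter.atTop (nhds 1) := by
      have h0 : Filter.Tendsto (fun n : ℕ => 1 / ((n : ℝ) + 2)) Filter.atTop (nhds 0) := by
        have hat : Filter.Tendsto (fun n : ℕ => (n : ℝ) + 2) Filter.atTop Filter.atTop :=
          Filter.tendsto_atTop_add_const_right _ 2 tendsto_natCast_atTop_atTop
        simpa [one_div, Pi.inv_def] using hat.inv_tendsto_atTop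
      have := h0.const_sub 1
      simpa [ht] using this
    set zn : ℕ → ℂ := fun n => (t n : ℂ) * z with hzn
    have habs : ∀ n, ‖zn n‖ = t n := by
      intro n
      simp [hzn, norm_mul, Complex.norm_real, Real.norm_eq_abs, abs_of_pos (ht0 n), h1]
    have hmem : ∀ n, zn n ∈ U := by
      intro n
      rw [hU]
      refine ⟨?_, ?_⟩
      · rw [Metric.mem_ball, Complex.dist_eq, sub_zero, habs n]
        have : (1:ℝ) < r := h1 ▸ hzr
        linarith [ht1 n]
      · simp only [Set.mem_singleton_iff, hzn]
        intro hcon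
        rcases mul_eq_zero.mp hcon with h' | h'
        · exact absurd (by exact_mod_cast h') (ne_of_gt (ht0 n))
        · exact hz0 h'
    have htend : Filter.Tendsto zn Filter.atTop (nhds z) := by
      have : Filter.Tendsto (fun n => ((t n : ℂ))) Filter.atTop (nhds (1 : ℂ)) :=
        (Complex.continuous_ofReal.tendsto 1).comp htend_t
      simpa using this.mul_const z
    have htendU : Filter.Tendsto zn Filter.atTop (nhdsWithin z U) :=
      tendsto_nhdsWithin_iff.mpr ⟨htend, Filter.Eventually.of_forall hmem⟩
    have hfz : Filter.Tendsto (fun n => f (zn n)) Filter.atTop (nhds (f z)) :=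
      (hf z hz).tendsto.comp htendU
    have hzero : ∀ n, f (zn n) = 0 := fun n =>
      h (zn n) (hmem n) (by rw [habs n]; exact ne_of_lt (ht1 n))
    have : Filter.Tendsto (fun n => f (zn n)) Filter.atTop (nhds 0) := by
      simp only [hzero]; exact tendsto_const_nhds
    exact tendsto_nhds_unique hfz this
  · exact h z hz h1

/-- If `H = diag(|z|^k, |z|^{-k})` with `k > 0` on a punctured disc and `C` is a
holomorphic symmetric matrix satisfying the compatibility `H̄⁻¹·C = C·H`, then the
diagonal entries of `C` vanish. -/
theorem compatible_symmetric_pairing_antidiagonal (r : ℝ) (hr : 0 < r)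
    (k : ℝ) (hk : 0 < k)
    (U : Set ℂ) (hU : U = Metric.ball 0 r \ {0})
    (C : ℂ → Matrix (Fin 2) (Fin 2) ℂ)
    (hC : ∀ i j, DifferentiableOn ℂ (fun z => C z i j) U)
    (hsym : ∀ z ∈ U, (C z)ᵀ = C z)
    (H : ℂ → Matrix (Fin 2) (Fin 2) ℂ)
    (hH : ∀ z : ℂ, H z =
      !![((‖z‖ ^ k : ℝ) : ℂ), 0; 0, ((‖z‖ ^ (-k) : ℝ) : ℂ)])
    (hcompat : ∀ z ∈ U, ((H z).map (starRingEnd ℂ))⁻¹ * C z = C z * H z) :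
    ∀ z ∈ U, C z 0 0 = 0 ∧ C z 1 1 = 0 := by
  have key : ∀ z ∈ U, ‖z‖ ≠ 1 → C z 0 0 = 0 ∧ C z 1 1 = 0 := by
    intro z hz h1
    have hz0 : z ≠ 0 := by rw [hU] at hz; exact hz.2
    have habs : 0 < ‖z‖ := norm_pos_iff.mpr hz0
    set a : ℝ := ‖z‖ ^ k with ha_def
    have ha : 0 < a := Real.rpow_pos_of_pos habs k
    have ha1 : a ≠ 1 := by
      rcases lt_or_gt_of_ne h1 with h | h
      · exact ne_of_lt (Real.rpow_lt_one habs.le h hk)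
      · exact ne_of_gt ((Real.one_lt_rpow_iff_of_pos habs).mpr (Or.inl ⟨h, hk⟩))
    have hH' : H z = !![(a : ℂ), 0; 0, ((a⁻¹ : ℝ) : ℂ)] := by
      rw [hH z, Real.rpow_neg habs.le]
    have hmap : (H z).map (starRingEnd ℂ) = H z := by
      rw [hH']
      ext i j
      fin_cases i <;> fin_cases j <;> simp [Complex.conj_ofReal]
    have hdet : IsUnit (H z).det := by
      rw [hH', Matrix.det_fin_two_of]
      have : ((a : ℂ)) * ((a⁻¹ : ℝ) : ℂ) = 1 := by
        rw [← Complex.ofReal_mul, mul_inv_cancel₀ ha.ne', Complex.ofReal_one]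
      simp [this, ha.ne']
    have hkey : C z = H z * (C z * H z) := by
      have hc := hcompat z hz
      rw [hmap] at hc
      rw [← hc, ← Matrix.mul_assoc, Matrix.mul_nonsing_inv _ hdet, Matrix.one_mul]
    have e0 := congrFun (congrFun hkey 0) 0
    have e1 := congrFun (congrFun hkey 1) 1
    simp [hH', Matrix.mul_apply, Fin.sum_univ_two] at e0 e1
    push_cast at e0 e1
    constructor
    · have h2 : C z 0 0 * ((a : ℂ) * a - 1) = 0 := by linear_combination -e0
      rcases mul_eq_zero.mp h2 with h' | h'
      · exact h'
      · exfalso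
        have : (a * a : ℝ) = 1 := by exact_mod_cast sub_eq_zero.mp h'
        rcases lt_or_gt_of_ne ha1 with h'' | h'' <;> nlinarith
    · have h2 : C z 1 1 * (((a : ℂ))⁻¹ * ((a : ℂ))⁻¹ - 1) = 0 := by
        linear_combination -e1
      rcases mul_eq_zero.mp h2 with h' | h'
      · exact h'
      · exfalso
        have : (a⁻¹ * a⁻¹ : ℝ) = 1 := by
          have := sub_eq_zero.mp h'
          push_cast at this
          exact_mod_cast this
        have haa : (a * a : ℝ) = 1 := by
          have h4 : a⁻¹ * a⁻¹ * (a * a) = a * a := by rw [this, one_mul]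
          field_simp at h4
          nlinarith [h4]
        rcases lt_or_gt_of_ne ha1 with h'' | h'' <;> nlinarith
  intro z hz
  constructor
  · exact aux_zero_of_zero_off_circle hU (fun z => C z 0 0)
      (hC 0 0).continuousOn (fun z hz h1 => (key z hz h1).1) z hz
  · exact aux_zero_of_zero_off_circle hU (fun z => C z 1 1)
      (hC 1 1).continuousOn (fun z hz h1 => (key z hz h1).2) z hz
end
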